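/- For every orthonormal pair of vectors x, y in ℝ⁷, the triple (x, y, x × y) is orthonormal and φ(x, y, x × y) = 1; that is, every oriented 2-plane in ℝ⁷ extends to an associative 3-plane by adjoining the cross product of an oriented orthonormal basis. -/

import Mathlib

open RealInnerProductSpace

noncomputable section

/-- `ℝ⁷` with the Euclidean inner product. -/
abbrev R7 := EuclideanSpace ℝ (Fin 7)

/-- The standard basis vectors `e₁, …, e₇` of `ℝ⁷` (0-indexed). -/
def stdBasis (i : Fin 7) : R7 := EuclideanSpace.single i 1

/-- `dx_i ∧ dx_j ∧ dx_k` evaluated on the triple `(x, y, z)` (0-indexed). -/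
def dx3 (i j k : Fin 7) (x y z : R7) : ℝ :=
  x i * (y j * z k - y k * z j) - x j * (y i * z k - y k * z i)
    + x k * (y i * z j - y j * z i)

/-- The associative calibration
`φ = dx₁₂₃ + dx₁₄₅ + dx₁₆₇ + dx₂₄₆ − dx₂₅₇ − dx₃₄₇ − dx₃₅₆` (0-indexed here). -/
def phi (x y z : R7) : ℝ :=
  dx3 0 1 2 x y z + dx3 0 3 4 x y z + dx3 0 5 6 x y z + dx3 1 3 5 x y z
    - dx3 1 4 6 x y z - dx3 2 3 6 x y z - dx3 2 4 5 x y z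

/-- The cross product on `ℝ⁷`: the unique vector with `⟪x × y, z⟫ = φ(x,y,z)` for all `z`. -/
def cross (x y : R7) : R7 := ∑ i, phi x y (stdBasis i) • stdBasis i

/-! Since `⟪x × y, z⟫ = φ(x, y, z)` and `φ` is alternating, `x × y` is orthogonal to `x` and `y`,
and `φ(x, y, x × y) = ‖x × y‖²`. A coordinate computation gives the Lagrange identity
`‖x × y‖² = ‖x‖²‖y‖² - ⟪x, y⟫²`, which equals `1` for an orthonormal pair. -/

lemma stdBasis_apply (i j : Fin 7) : stdBasis i j = if j = i then 1 else 0 := by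
  simp [stdBasis, PiLp.single_apply]

lemma cross_apply_eq_phi (x y : R7) (j : Fin 7) : cross x y j = phi x y (stdBasis j) := by
  simp [cross, stdBasis_apply]

lemma inner_eq_sum_mul (x y : R7) : ⟪x, y⟫ = ∑ i, x i * y i := by
  simp [PiLp.inner_apply, mul_comm]

lemma inner_cross (x y z : R7) : ⟪cross x y, z⟫ = phi x y z := by
  simp only [inner_eq_sum_mul, Fin.sum_univ_seven, cross_apply_eq_phi, phi, dx3, stdBasis_apply,
    Fin.reduceEq, ↓reduceIte]
  ring

lemma dx3_self_left (i j k : Fin 7) (x y : R7) : dx3 i j k x y x = 0 := by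
  unfold dx3; ring

lemma dx3_self_right (i j k : Fin 7) (x y : R7) : dx3 i j k x y y = 0 := by
  unfold dx3; ring

lemma inner_cross_self_left (x y : R7) : ⟪x, cross x y⟫ = 0 := by
  rw [real_inner_comm, inner_cross]; simp [phi, dx3_self_left]

lemma inner_cross_self_right (x y : R7) : ⟪y, cross x y⟫ = 0 := by
  rw [real_inner_comm, inner_cross]; simp [phi, dx3_self_right]

lemma norm_cross_sq (x y : R7) : ‖cross x y‖ ^ 2 = ‖x‖ ^ 2 * ‖y‖ ^ 2 - ⟪x, y⟫ ^ 2 := by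
  simp only [← real_inner_self_eq_norm_sq, inner_eq_sum_mul, Fin.sum_univ_seven, cross_apply_eq_phi,
    phi, dx3, stdBasis_apply, Fin.reduceEq, ↓reduceIte]
  ring

lemma phi_cross (x y : R7) : phi x y (cross x y) = ‖cross x y‖ ^ 2 := by
  rw [← inner_cross, real_inner_self_eq_norm_sq]

/-- For every orthonormal pair `x, y` in `ℝ⁷`, the triple
`(x, y, x × y)` is orthonormal and `φ(x, y, x × y) = 1`: every oriented 2-plane in `ℝ⁷`
extends to an associative 3-plane by adjoining the cross product. -/
theorem extend_to_associative (x y : R7)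
    (hx : ‖x‖ = 1) (hy : ‖y‖ = 1) (hxy : ⟪x, y⟫ = 0) :
    ‖cross x y‖ = 1 ∧ ⟪x, cross x y⟫ = 0 ∧ ⟪y, cross x y⟫ = 0 ∧
    phi x y (cross x y) = 1 := by
  have hcross : ‖cross x y‖ ^ 2 = 1 := by rw [norm_cross_sq, hx, hy, hxy]; norm_num
  refine ⟨?_, inner_cross_self_left x y, inner_cross_self_right x y, by rw [phi_cross, hcross]⟩
  exact (pow_eq_one_iff_of_nonneg (norm_nonneg _) two_ne_zero).mp hcross
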